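/- Let λ be a real number with λ < 0 or λ > 1, set c = (1−λ+ρ(λ))/λ and t = −arccos c. Then c ∈ (−1/2, 1), and κ₁(λ,t) = r₁(λ), κ₂(λ,t) = r₂(λ), κ₃(λ,t) = r₃(λ). (Thus the edge of regression of the extended oloid is given in terms of the system parameter λ by the points (±r₁(λ), r₂(λ), ±r₃(λ)).) -/
import Mathlib


open Real

/-- `ρ(λ) = sgn(λ)·√(1−λ+λ²)`. -/
noncomputable def ρ (l : ℝ) : ℝ := Real.sign l * Real.sqrt (1 - l + l ^ 2)

/-- First coordinate of the edge of regression in terms of the system parameter. -/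
noncomputable def r₁ (l : ℝ) : ℝ :=
  Real.sqrt ((l - 1) ^ 3 * (2 - l + 2 * ρ l)) / (l * (2 - l + ρ l))

/-- Second coordinate of the edge of regression in terms of the system parameter. -/
noncomputable def r₂ (l : ℝ) : ℝ :=
  (l ^ 2 + 2 * l - 2 + (l - 2) * ρ l) / (2 * l * (2 - l + ρ l))

/-- Third coordinate of the edge of regression in terms of the system parameter. -/
noncomputable def r₃ (l : ℝ) : ℝ :=
  Real.sign l * Real.sqrt (l * (2 - l + 2 * ρ l)) / (2 - l + ρ l)

/-- First coordinate of the touching curve `C_λ`. -/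
noncomputable def κ₁ (l t : ℝ) : ℝ := (1 - l) * sin t / (1 + l * cos t)

/-- Second coordinate of the touching curve `C_λ`. -/
noncomputable def κ₂ (l t : ℝ) : ℝ :=
  (2 * l - 1 + (l - 2) * cos t) / (2 * (1 + l * cos t))

/-- Third coordinate of the touching curve `C_λ`. -/
noncomputable def κ₃ (l t : ℝ) : ℝ :=
  l * Real.sqrt (1 + 2 * cos t) / (1 + l * cos t)

/-- For `λ < 0` or `λ > 1`, with `c = (1−λ+ρ(λ))/λ` and `t = −arccos c`, one has
`c ∈ (−1/2, 1)` and `κⱼ(λ,t) = rⱼ(λ)`: the edge of regression of the extended oloid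
is given in terms of the system parameter by the points `(±r₁(λ), r₂(λ), ±r₃(λ))`. -/
theorem stmt_13 (l : ℝ) (hl : l < 0 ∨ 1 < l) :
    let c := (1 - l + ρ l) / l
    let t := -Real.arccos c
    c ∈ Set.Ioo (-(1/2) : ℝ) 1 ∧
      κ₁ l t = r₁ l ∧ κ₂ l t = r₂ l ∧ κ₃ l t = r₃ l := by
  intro c t
  have h1 : (0:ℝ) < 1 - l + l ^ 2 := by nlinarith [sq_nonneg (2*l - 1)]
  set s := Real.sqrt (1 - l + l ^ 2) with hs
  have hs2 : s ^ 2 = 1 - l + l ^ 2 := Real.sq_sqrt h1.le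
  have hs0 : 0 < s := Real.sqrt_pos.mpr h1
  rcases hl with hl | hl
  · -- case l < 0
    have hρ : ρ l = -s := by rw [ρ, Real.sign_of_neg hl]; ring
    have hl0 : l ≠ 0 := ne_of_lt hl
    have hc : c = (1 - l - s) / l := by
      show (1 - l + ρ l) / l = _; rw [hρ]; ring_nf
    have hd : 0 < 2 - l - s := by nlinarith
    have hd' : 2 - l - s ≠ 0 := hd.ne'
    have hnum : 0 < 1 - l - s := by nlinarith
    have hcm : -(1/2) < c := by
      rw [hc, lt_div_iff_of_neg hl]; nlinarith
    have hc1 : c < 1 := by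
      have : (1 - l - s) / l < 0 := div_neg_of_pos_of_neg hnum hl
      rw [hc]; linarith
    have hct : Real.cos t = c := by
      show Real.cos (-Real.arccos c) = c
      rw [Real.cos_neg, Real.cos_arccos (by linarith) hc1.le]
    have hst : Real.sin t = -Real.sqrt (1 - c ^ 2) := by
      show Real.sin (-Real.arccos c) = _
      rw [Real.sin_neg, Real.sin_arccos]
    have hden : 1 + l * c = 2 - l - s := by
      rw [hc]; field_simp; ring
    have h1c2 : 1 - c ^ 2 = (l - 1) * (2 - l - 2*s) / l ^ 2 := by
      rw [hc]; field_simp; linear_combination -hs2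
    have hpos2 : (0:ℝ) ≤ (l - 1) * (2 - l - 2*s) := by nlinarith
    have hsq : Real.sqrt (1 - c ^ 2) = Real.sqrt ((l - 1) * (2 - l - 2*s)) / (-l) := by
      rw [h1c2, show l ^ 2 = (-l) ^ 2 by ring, Real.sqrt_div hpos2,
        Real.sqrt_sq (by linarith : (0:ℝ) ≤ -l)]
    refine ⟨⟨hcm, hc1⟩, ?_, ?_, ?_⟩
    · rw [κ₁, r₁, hct, hst, hden, hρ, hsq,
        show (l - 1) ^ 3 * (2 - l + 2 * -s) = (1 - l) ^ 2 * ((l - 1) * (2 - l - 2*s)) by ring,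
        Real.sqrt_mul (sq_nonneg _), Real.sqrt_sq (by linarith : (0:ℝ) ≤ 1 - l),
        show (2 : ℝ) - l + -s = 2 - l - s by ring]
      field_simp
    · rw [κ₂, r₂, hct, hden, hρ, hc,
        show (2 : ℝ) - l + -s = 2 - l - s by ring]
      rw [div_eq_div_iff (by positivity) (by simp [hl0, hd'])]
      field_simp
      ring
    · rw [κ₃, r₃, hct, hden, hρ, Real.sign_of_neg hl,
        show (2 : ℝ) - l + -s = 2 - l - s by ring]
      have h12c : 1 + 2 * c = (2*s + l - 2) / (-l) := by
        rw [eq_div_iff (neg_ne_zero.mpr hl0), hc]; field_simp; ring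
      have hq : (0:ℝ) ≤ 2*s + l - 2 := by nlinarith
      rw [h12c, Real.sqrt_div hq,
        show l * (2 - l + 2 * -s) = (-l) * (2*s + l - 2) by ring,
        Real.sqrt_mul (by linarith : (0:ℝ) ≤ -l)]
      rw [show l * (Real.sqrt (2*s + l - 2) / Real.sqrt (-l)) =
          -((-l) / Real.sqrt (-l)) * Real.sqrt (2*s + l - 2) by ring,
        Real.div_sqrt]
      ring
  · -- case 1 < l
    have hρ : ρ l = s := by rw [ρ, Real.sign_of_pos (by linarith : (0:ℝ) < l)]; ring
    have hl0 : (0:ℝ) < l := by linarith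
    have hl0' : l ≠ 0 := hl0.ne'
    have hc : c = (1 - l + s) / l := by
      show (1 - l + ρ l) / l = _; rw [hρ]
    have hd : 0 < 2 - l + s := by nlinarith
    have hd' : 2 - l + s ≠ 0 := hd.ne'
    have hcm : -(1/2) < c := by
      rw [hc, lt_div_iff₀ hl0]; nlinarith
    have hc1 : c < 1 := by
      rw [hc, div_lt_one hl0]; nlinarith
    have hct : Real.cos t = c := by
      show Real.cos (-Real.arccos c) = c
      rw [Real.cos_neg, Real.cos_arccos (by linarith) hc1.le]
    have hst : Real.sin t = -Real.sqrt (1 - c ^ 2) := by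
      show Real.sin (-Real.arccos c) = _
      rw [Real.sin_neg, Real.sin_arccos]
    have hden : 1 + l * c = 2 - l + s := by
      rw [hc]; field_simp; ring
    have h1c2 : 1 - c ^ 2 = (l - 1) * (2 - l + 2*s) / l ^ 2 := by
      rw [hc]; field_simp; linear_combination -hs2
    have hpos2 : (0:ℝ) ≤ (l - 1) * (2 - l + 2*s) := by nlinarith
    have hsq : Real.sqrt (1 - c ^ 2) = Real.sqrt ((l - 1) * (2 - l + 2*s)) / l := by
      rw [h1c2, Real.sqrt_div hpos2, Real.sqrt_sq hl0.le]
    refine ⟨⟨hcm, hc1⟩, ?_, ?_, ?_⟩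
    · rw [κ₁, r₁, hct, hst, hden, hρ, hsq,
        show (l - 1) ^ 3 * (2 - l + 2 * s) = (l - 1) ^ 2 * ((l - 1) * (2 - l + 2*s)) by ring,
        Real.sqrt_mul (sq_nonneg _), Real.sqrt_sq (by linarith : (0:ℝ) ≤ l - 1)]
      field_simp
      ring
    · rw [κ₂, r₂, hct, hden, hρ, hc]
      rw [div_eq_div_iff (by positivity) (by simp [hl0', hd'])]
      field_simp
      ring
    · rw [κ₃, r₃, hct, hden, hρ, Real.sign_of_pos hl0]
      have h12c : 1 + 2 * c = (2 - l + 2*s) / l := by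
        rw [hc]; field_simp; ring
      have hq : (0:ℝ) ≤ 2 - l + 2*s := by nlinarith
      rw [h12c, Real.sqrt_div hq, Real.sqrt_mul hl0.le]
      rw [show l * (Real.sqrt (2 - l + 2*s) / Real.sqrt l) =
          (l / Real.sqrt l) * Real.sqrt (2 - l + 2*s) by ring,
        Real.div_sqrt]
      ring
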